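/- Suppose the weights have the additive-plus-interaction form w(a) = Σ_{k : a_k = 1} T_k + r(a) + m for all a ∈ {−1,1}^K, where T : {1,…,K} → ℝ, r : {−1,1}^K → ℝ, m ∈ ℝ, and w(a) ≥ 0 for all a. If 2·max_{a ∈ {−1,1}^K} |r(a)| < min_{1 ≤ k ≤ K} |T_k|, then every f ∈ {−1,1}^K with RH(f) = min_{d ∈ {−1,1}^K} RH(d) also satisfies R01(f) = min_{d ∈ {−1,1}^K} R01(d). (Fisher consistency under additive treatment effects with small interactions, pointwise form of Theorem 2.) -/
import Mathlib

open Finset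

noncomputable section

/-- The cube `{-1,1}^K` as a finite set of real vectors. -/
def cube (K : ℕ) : Finset (Fin K → ℝ) :=
  Finset.univ.image (fun b : Fin K → Bool => fun k => if b k then 1 else -1)

lemma cube_nonempty (K : ℕ) : (cube K).Nonempty :=
  Finset.Nonempty.image Finset.univ_nonempty _

lemma univ_fin_nonempty {K : ℕ} (hK : 1 ≤ K) :
    (Finset.univ : Finset (Fin K)).Nonempty :=
  ⟨⟨0, hK⟩, Finset.mem_univ _⟩

/-- Outcome weighted 0-1 risk at a fixed covariate value:
`R01(d) = Σ_{a ∈ {-1,1}^K} w(a) · 1{a ≠ d}`. -/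
def R01 {K : ℕ} (w : (Fin K → ℝ) → ℝ) (d : Fin K → ℝ) : ℝ :=
  ∑ a ∈ cube K, w a * (if a = d then 0 else 1)

/-- Outcome weighted Hamming risk at a fixed covariate value:
`RH(d) = Σ_{a ∈ {-1,1}^K} w(a) · (1/K) Σ_k 1{a_k ≠ d_k}`. -/
def RH {K : ℕ} (w : (Fin K → ℝ) → ℝ) (d : Fin K → ℝ) : ℝ :=
  ∑ a ∈ cube K, w a * ((1 / (K : ℝ)) * ∑ k : Fin K, if a k = d k then 0 else 1)

/-- Contrast of treatment `k`:
`c_k(w) = Σ_{a : a_k = 1} w(a) - Σ_{a : a_k = -1} w(a)`. -/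
def contrast {K : ℕ} (w : (Fin K → ℝ) → ℝ) (k : Fin K) : ℝ :=
  ∑ a ∈ (cube K).filter (fun a => a k = 1), w a
    - ∑ a ∈ (cube K).filter (fun a => a k = -1), w a

lemma mem_cube_iff {K : ℕ} {a : Fin K → ℝ} :
    a ∈ cube K ↔ ∀ k, a k = 1 ∨ a k = -1 := by
  constructor
  · rintro h k
    simp only [cube, mem_image, mem_univ, true_and] at h
    obtain ⟨b, rfl⟩ := h
    by_cases hb : b k <;> simp [hb]
  · intro h
    simp only [cube, mem_image, mem_univ, true_and]
    refine ⟨fun k => if a k = 1 then true else false, funext fun k => ?_⟩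
    rcases h k with h1 | h1 <;> simp [h1] <;> norm_num

def flipv {K : ℕ} (k : Fin K) (a : Fin K → ℝ) : Fin K → ℝ :=
  fun j => if j = k then -a j else a j

lemma flipv_self {K : ℕ} (k : Fin K) (a : Fin K → ℝ) : flipv k a k = -a k := by
  simp [flipv]

lemma flipv_ne {K : ℕ} (k j : Fin K) (a : Fin K → ℝ) (h : j ≠ k) : flipv k a j = a j := by
  simp [flipv, h]

lemma flipv_flipv {K : ℕ} (k : Fin K) (a : Fin K → ℝ) : flipv k (flipv k a) = a := by
  funext j
  by_cases h : j = k <;> simp [flipv, h]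

lemma flipv_mem {K : ℕ} {k : Fin K} {a : Fin K → ℝ} (ha : a ∈ cube K) :
    flipv k a ∈ cube K := by
  rw [mem_cube_iff] at ha ⊢
  intro j
  by_cases h : j = k
  · subst h; rcases ha j with h1 | h1 <;> simp [flipv, h1]
  · simpa [flipv, h] using ha j

lemma R01_eq {K : ℕ} (w : (Fin K → ℝ) → ℝ) {d : Fin K → ℝ} (hd : d ∈ cube K) :
    R01 w d = (∑ a ∈ cube K, w a) - w d := by
  unfold R01
  rw [Finset.sum_congr rfl (fun a _ => show w a * (if a = d then 0 else 1)
        = w a - (if a = d then w a else 0) by split <;> ring),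
      Finset.sum_sub_distrib]
  congr 1
  rw [Finset.sum_ite_eq' (cube K) d w]
  simp [hd]

lemma RH_eq {K : ℕ} (w : (Fin K → ℝ) → ℝ) (d : Fin K → ℝ) :
    RH w d = (1/(K:ℝ)) * ∑ a ∈ cube K, w a * (∑ k : Fin K, if a k = d k then 0 else 1) := by
  unfold RH
  rw [Finset.mul_sum]
  exact Finset.sum_congr rfl (fun a _ => by ring)

lemma sum_T_flip {K : ℕ} (T : Fin K → ℝ) (k : Fin K) (a : Fin K → ℝ)
    (ha : a k = 1 ∨ a k = -1) :
    (∑ j ∈ univ.filter (fun j => a j = 1), T j)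
      - (∑ j ∈ univ.filter (fun j => flipv k a j = 1), T j) = a k * T k := by
  rw [Finset.sum_filter, Finset.sum_filter, ← Finset.sum_sub_distrib]
  rw [Finset.sum_eq_single k]
  · rcases ha with h | h <;> rw [flipv_self, h] <;> norm_num
  · intro j _ hjk
    rw [flipv_ne k j a hjk, sub_self]
  · simp

/-- Fisher consistency under additive treatment effects with small interactions
(pointwise form of Theorem 2). -/
theorem fisher_consistency_additive_pointwise
    (K : ℕ) (hK : 1 ≤ K) (w : (Fin K → ℝ) → ℝ)
    (T : Fin K → ℝ) (r : (Fin K → ℝ) → ℝ) (m : ℝ)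
    (hwform : ∀ a ∈ cube K,
      w a = (∑ k ∈ Finset.univ.filter (fun k => a k = 1), T k) + r a + m)
    (hw : ∀ a ∈ cube K, 0 ≤ w a)
    (hsmall : 2 * (cube K).sup' (cube_nonempty K) (fun a => |r a|)
      < Finset.univ.inf' (univ_fin_nonempty hK) (fun k => |T k|))
    (f : Fin K → ℝ) (hf : f ∈ cube K)
    (hfmin : ∀ d ∈ cube K, RH w f ≤ RH w d) :
    ∀ d ∈ cube K, R01 w f ≤ R01 w d := by
  classical
  set M := (cube K).sup' (cube_nonempty K) (fun a => |r a|) with hMdef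
  set t := Finset.univ.inf' (univ_fin_nonempty hK) (fun k => |T k|) with htdef
  have hM : ∀ a ∈ cube K, |r a| ≤ M := fun a ha => Finset.le_sup' (fun x => |r x|) ha
  have hM0 : 0 ≤ M := by
    obtain ⟨a0, ha0⟩ := cube_nonempty K
    exact le_trans (abs_nonneg _) (hM a0 ha0)
  have ht : ∀ k, t ≤ |T k| := fun k => Finset.inf'_le _ (Finset.mem_univ k)
  -- Step A: the Hamming minimizer satisfies f k * T k > 0 for all k
  have hsign : ∀ k : Fin K, 0 < f k * T k := by
    intro k
    have hfk := (mem_cube_iff.mp hf) k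
    have hF : flipv k f ∈ cube K := flipv_mem hf
    have hRH := hfmin _ hF
    rw [RH_eq, RH_eq] at hRH
    have hKpos : (0:ℝ) < 1 / (K:ℝ) := by
      have : (0:ℝ) < (K:ℝ) := by exact_mod_cast hK
      positivity
    have hD : (∑ a ∈ cube K, w a * (∑ j : Fin K, if a j = f j then (0:ℝ) else 1))
        ≤ ∑ a ∈ cube K, w a * (∑ j : Fin K, if a j = flipv k f j then (0:ℝ) else 1) :=
      le_of_mul_le_mul_left (by exact hRH) hKpos
    -- per-element difference of Hamming counts
    have hstep : ∀ a ∈ cube K,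
        (∑ j : Fin K, if a j = flipv k f j then (0:ℝ) else 1)
          - (∑ j : Fin K, if a j = f j then (0:ℝ) else 1)
        = if a k = f k then 1 else -1 := by
      intro a ha
      rw [← Finset.sum_sub_distrib, Finset.sum_eq_single k]
      · rw [flipv_self]
        rcases (mem_cube_iff.mp ha) k with h1 | h1 <;> rcases hfk with h2 | h2 <;>
          rw [h1, h2] <;> norm_num
      · intro j _ hjk
        rw [flipv_ne k j f hjk, sub_self]
      · simp
    have hD2 : (0:ℝ) ≤ ∑ a ∈ cube K, (if a k = f k then w a else -w a) := by
      have hc : ∀ a ∈ cube K, (if a k = f k then w a else -w a)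
          = w a * (∑ j : Fin K, if a j = flipv k f j then (0:ℝ) else 1)
            - w a * (∑ j : Fin K, if a j = f j then (0:ℝ) else 1) := by
        intro a ha
        rw [← mul_sub, hstep a ha]
        split <;> ring
      rw [Finset.sum_congr rfl hc, Finset.sum_sub_distrib]
      linarith [hD]
    rw [Finset.sum_ite] at hD2
    have hfilter : (cube K).filter (fun a => ¬ a k = f k)
        = (cube K).filter (fun a => a k = -f k) := by
      apply Finset.filter_congr
      intro a ha
      rcases (mem_cube_iff.mp ha) k with h1 | h1 <;> rcases hfk with h2 | h2 <;>
        rw [h1, h2] <;> norm_num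
    rw [hfilter] at hD2
    have hreindex : ∑ a ∈ (cube K).filter (fun a => a k = -f k), w a
        = ∑ a ∈ (cube K).filter (fun a => a k = f k), w (flipv k a) := by
      refine (Finset.sum_nbij' (i := flipv k) (j := flipv k) ?_ ?_ ?_ ?_ ?_).symm
      · intro a ha
        obtain ⟨ha1, ha2⟩ := Finset.mem_filter.mp ha
        exact Finset.mem_filter.mpr ⟨flipv_mem ha1, by rw [flipv_self, ha2]⟩
      · intro a ha
        obtain ⟨ha1, ha2⟩ := Finset.mem_filter.mp ha
        refine Finset.mem_filter.mpr ⟨flipv_mem ha1, ?_⟩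
        rw [flipv_self, ha2, neg_neg]
      · intro a _; exact flipv_flipv k a
      · intro a _; exact flipv_flipv k a
      · intro a _; rfl
    rw [Finset.sum_neg_distrib, hreindex] at hD2
    have hD3 : (0:ℝ) ≤ ∑ a ∈ (cube K).filter (fun a => a k = f k),
        (w a - w (flipv k a)) := by
      rw [Finset.sum_sub_distrib]
      linarith
    by_contra hneg
    push_neg at hneg
    have habs : |f k * T k| = |T k| := by
      rw [abs_mul]
      rcases hfk with h | h <;> rw [h] <;> norm_num
    have habs2 : -(f k * T k) = |T k| := by
      rw [← habs, abs_of_nonpos hneg]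
    have hlt : f k * T k + 2 * M < 0 := by
      have := ht k
      linarith
    have hterm : ∀ a ∈ (cube K).filter (fun a => a k = f k),
        w a - w (flipv k a) < 0 := by
      intro a haf
      obtain ⟨ha, hak⟩ := Finset.mem_filter.mp haf
      have hFa : flipv k a ∈ cube K := flipv_mem ha
      have h1 := sum_T_flip T k a ((mem_cube_iff.mp ha) k)
      rw [hak] at h1
      have h2 := abs_le.mp (hM a ha)
      have h3 := abs_le.mp (hM _ hFa)
      rw [hwform a ha, hwform _ hFa]
      linarith
    have hne : ((cube K).filter (fun a => a k = f k)).Nonempty :=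
      ⟨f, Finset.mem_filter.mpr ⟨hf, rfl⟩⟩
    have := Finset.sum_neg hterm hne
    linarith
  -- Step B: w attains its maximum on the cube at f
  have hwmax : ∀ d ∈ cube K, w d ≤ w f := by
    intro d hd
    by_cases hdf : d = f
    · subst hdf; exact le_refl _
    · have hex : ∃ k, d k ≠ f k := by
        by_contra hc; push_neg at hc; exact hdf (funext hc)
      obtain ⟨k0, hk0⟩ := hex
      have hsum : (∑ j ∈ univ.filter (fun j => f j = 1), T j)
          - (∑ j ∈ univ.filter (fun j => d j = 1), T j)
          = ∑ j : Fin K, ((if f j = 1 then T j else 0) - (if d j = 1 then T j else 0)) := by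
        rw [Finset.sum_filter, Finset.sum_filter, Finset.sum_sub_distrib]
      have hg0 : ∀ j, (0:ℝ) ≤ (if f j = 1 then T j else 0) - (if d j = 1 then T j else 0) := by
        intro j
        have hs := hsign j
        rcases (mem_cube_iff.mp hf) j with h1 | h1 <;>
          rcases (mem_cube_iff.mp hd) j with h2 | h2 <;>
          rw [h1] at hs <;> rw [h1, h2] <;> norm_num <;> linarith
      have hgk0 : t ≤ (if f k0 = 1 then T k0 else 0) - (if d k0 = 1 then T k0 else 0) := by
        have hs := hsign k0
        have hTa := ht k0
        rcases (mem_cube_iff.mp hf) k0 with h1 | h1 <;>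
          rcases (mem_cube_iff.mp hd) k0 with h2 | h2
        · exact absurd (h2.trans h1.symm) hk0
        · rw [h1] at hs
          rw [h1, h2]
          norm_num
          rw [abs_of_pos (by linarith)] at hTa
          linarith
        · rw [h1] at hs
          rw [h1, h2]
          norm_num
          rw [abs_of_neg (by linarith)] at hTa
          linarith
        · exact absurd (h2.trans h1.symm) hk0
      have hsingle : (if f k0 = 1 then T k0 else 0) - (if d k0 = 1 then T k0 else 0)
          ≤ ∑ j : Fin K, ((if f j = 1 then T j else 0) - (if d j = 1 then T j else 0)) :=
        Finset.single_le_sum (fun j _ => hg0 j) (Finset.mem_univ k0)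
      have hrd := abs_le.mp (hM d hd)
      have hrf := abs_le.mp (hM f hf)
      rw [hwform d hd, hwform f hf]
      linarith [hsum, hsingle, hgk0, hsmall]
  intro d hd
  rw [R01_eq w hf, R01_eq w hd]
  linarith [hwmax d hd]
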